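/- Let W[1..m] be a sequence of m ≥ 1 binary strings of length ℓ ≥ 1, with s(i) as in the definition of SeqToString, and let T = SeqToString_ℓ(W). Fix X ∈ {0,1}^{≤ℓ} and b, e ∈ [0..m], and set P₁ = rev(X)·4·s(b), P₂ = rev(X)·4·s(e), and β = ℓ + ⌊log₂ m⌋ + 2. Let 𝒫 = { i ∈ (b..e] : X is a prefix of W[i] } and 𝒬 = LexRange(P₁,P₂,T). Then (1) 𝒫 = { ⌈ j / β ⌉ : j ∈ 𝒬 }, and (2) |𝒫| = |𝒬|. -/

import Mathlib

/-- Strict lexicographic order on strings: `U ≺ V` iff `U` is a proper prefix of `V`,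
or `U` and `V` first differ at a position where `U` has the smaller symbol. -/
def LexLt {α : Type*} [LT α] (U V : List α) : Prop := List.Lex (· < ·) U V

/-- Non-strict lexicographic order on strings. -/
def LexLe {α : Type*} [LT α] (U V : List α) : Prop := LexLt U V ∨ U = V

/-- The suffix `T[j..|T|]` of `T` (1-based index `j`). -/
def Suf {α : Type*} (T : List α) (j : ℕ) : List α := T.drop (j - 1)

/-- `Occ P T` is the set of starting positions (1-based) of occurrences of `P` in `T`. -/
def Occ {α : Type*} (P T : List α) : Set ℕ :=
  { j | 1 ≤ j ∧ j + P.length ≤ T.length + 1 ∧ (Suf T j).take P.length = P }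

/-- `RangeBeg P T` = number of suffixes of `T` lexicographically smaller than `P`. -/
noncomputable def RangeBeg {α : Type*} [LT α] (P T : List α) : ℕ :=
  { j | 1 ≤ j ∧ j ≤ T.length ∧ LexLt (Suf T j) P }.ncard

/-- `RangeEnd P T = RangeBeg P T + |Occ P T|`. -/
noncomputable def RangeEnd {α : Type*} [LT α] (P T : List α) : ℕ :=
  RangeBeg P T + (Occ P T).ncard

/-- `LexRange P₁ P₂ T` = positions `j ∈ [1..|T|]` with `P₁ ⪯ T[j..|T|] ≺ P₂`. -/
def LexRange {α : Type*} [LT α] (P₁ P₂ T : List α) : Set ℕ :=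
  { j | 1 ≤ j ∧ j ≤ T.length ∧ LexLe P₁ (Suf T j) ∧ LexLt (Suf T j) P₂ }

/-- `sa` is the suffix array of `T` (1-based): a permutation of `[1..|T|]` listing the
starting positions of the suffixes of `T` in increasing lexicographic order. -/
def IsSuffixArray {α : Type*} [LT α] (T : List α) (sa : ℕ → ℕ) : Prop :=
  (∀ i, 1 ≤ i → i ≤ T.length → 1 ≤ sa i ∧ sa i ≤ T.length) ∧
  (∀ j, 1 ≤ j → j ≤ T.length → ∃ i, 1 ≤ i ∧ i ≤ T.length ∧ sa i = j) ∧
  (∀ i j, 1 ≤ i → i < j → j ≤ T.length → LexLt (Suf T (sa i)) (Suf T (sa j)))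

/-- `binSym k x` : the length-`k` binary representation of `x` (MSB first, leading zeros). -/
def binSym (k x : ℕ) : List ℕ := (List.range k).map fun i => x / 2 ^ (k - 1 - i) % 2

/-- `binStr k S` = `bin_k(S[1]) · bin_k(S[2]) · … · bin_k(S[|S|])`. -/
def binStr (k : ℕ) (S : List ℕ) : List ℕ := (S.map (binSym k)).flatten

/-- `ebinSym k x = 1^{k+1} · 0 · bin_k(x) · 0`. -/
def ebinSym (k x : ℕ) : List ℕ := List.replicate (k + 1) 1 ++ [0] ++ binSym k x ++ [0]

/-- `ebinStr k S` = concatenation of `ebin_k(S[i])` for `i = 1, …, |S|`. -/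
def ebinStr (k : ℕ) (S : List ℕ) : List ℕ := (S.map (ebinSym k)).flatten

/-- `sEnc k i` : length-`k` base-2 representation of `i` with `0 ↦ 2` and `1 ↦ 3`. -/
def sEnc (k i : ℕ) : List ℕ := (binSym k i).map (· + 2)

/-- `SeqToString m W = ⊙_{i=1}^{m} rev(W[i]) · 4 · s(i-1)` with `k = 1 + ⌊log₂ m⌋`. -/
def SeqToString (m : ℕ) (W : ℕ → List ℕ) : List ℕ :=
  ((List.range m).map
    fun i => (W (i + 1)).reverse ++ [4] ++ sEnc (1 + Nat.log 2 m) i).flatten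

/-- `PermSeqToString m π W = ⊙_{i=1}^{m} rev(W[π[i]]) · 4 · s(π[i]-1)`. -/
def PermSeqToString (m : ℕ) (perm : ℕ → ℕ) (W : ℕ → List ℕ) : List ℕ :=
  ((List.range m).map
    fun i => (W (perm (i + 1))).reverse ++ [4]
      ++ sEnc (1 + Nat.log 2 m) (perm (i + 1) - 1)).flatten

/-- `PrefixRank W j X = |{ i ∈ [1..j] : X is a prefix of W[i] }|`. -/
noncomputable def PrefixRank {α : Type*} (W : ℕ → List α) (j : ℕ) (X : List α) : ℕ :=
  { i | 1 ≤ i ∧ i ≤ j ∧ X <+: W i }.ncard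

/-- `p` is the `r`-th smallest element of the set `A ⊆ ℕ`. -/
def IsKthSmallest (A : Set ℕ) (r p : ℕ) : Prop :=
  p ∈ A ∧ (A ∩ Set.Iic p).ncard = r

/-- Ceiling division `⌈a / b⌉` of positive naturals. -/
def cdiv (a b : ℕ) : ℕ := (a + b - 1) / b

/-- Alphabet inversion: `inv_σ(S)[i] = σ - 1 - S[i]`. -/
def invStr (σ : ℕ) (S : List ℕ) : List ℕ := S.map fun a => σ - 1 - a

/-- `p` is a period of `S`: `1 ≤ p ≤ |S|` and `S[i] = S[i+p]` for all `i ∈ [1..|S|-p]`. -/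
def IsPeriod {α : Type*} (S : List α) (p : ℕ) : Prop :=
  1 ≤ p ∧ p ≤ S.length ∧ S.drop p <+: S

/-- `per S`: the smallest period of `S`. -/
noncomputable def per {α : Type*} (S : List α) : ℕ := sInf { p | IsPeriod S p }

/-- `P` is `τ`-periodic: `|P| ≥ 3τ - 1` and `per(P[1..3τ-1]) ≤ τ/3`. -/
noncomputable def TauPeriodic {α : Type*} (τ : ℕ) (P : List α) : Prop :=
  3 * τ ≤ P.length + 1 ∧ 3 * per (P.take (3 * τ - 1)) ≤ τ

/-- `R(τ,T) = { i ∈ [1..n-3τ+2] : per(T[i..i+3τ-2]) ≤ τ/3 }`. -/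
noncomputable def Rset {α : Type*} (τ : ℕ) (T : List α) : Set ℕ :=
  { i | 1 ≤ i ∧ i + 3 * τ ≤ T.length + 2 ∧ 3 * per ((Suf T i).take (3 * τ - 1)) ≤ τ }

/-- `S` is a `τ`-synchronizing set of `T` (consistency and density conditions). -/
noncomputable def IsSyncSet {α : Type*} (τ : ℕ) (T : List α) (S : Set ℕ) : Prop :=
  (∀ j ∈ S, 1 ≤ j ∧ j + 2 * τ ≤ T.length + 1) ∧
  (∀ i j, 1 ≤ i → i + 2 * τ ≤ T.length + 1 → 1 ≤ j → j + 2 * τ ≤ T.length + 1 →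
    (Suf T i).take (2 * τ) = (Suf T j).take (2 * τ) → (i ∈ S ↔ j ∈ S)) ∧
  (∀ i, 1 ≤ i → i + 3 * τ ≤ T.length + 2 → (S ∩ Set.Ico i (i + τ) = ∅ ↔ i ∈ Rset τ T))

/-- `succ_S(x) = min { x' ∈ S : x' ≥ x }`. -/
noncomputable def succS (S : Set ℕ) (x : ℕ) : ℕ := sInf (S ∩ Set.Ici x)

/-- `DistPrefixes(τ,T,S) = { T[j..succ_S(j)+2τ) : j ∈ [1..n-3τ+2] \ R(τ,T) }`. -/
noncomputable def DistPrefixes {α : Type*} (τ : ℕ) (T : List α) (S : Set ℕ) : Set (List α) :=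
  (fun j => (Suf T j).take (succS S j + 2 * τ - j)) ''
    { j | 1 ≤ j ∧ j + 3 * τ ≤ T.length + 2 ∧ j ∉ Rset τ T }

/-- `r` is the value of the prefix RMQ: the smallest index `i ∈ (b..e]` with `X` a prefix of
`W[i]` minimizing `A[i]` (ties broken towards the smaller index). -/
def IsPrefixRMQ (A : ℕ → ℤ) (W : ℕ → List ℕ) (b e : ℕ) (X : List ℕ) (r : ℕ) : Prop :=
  (b < r ∧ r ≤ e ∧ X <+: W r) ∧
  (∀ i, b < i → i ≤ e → X <+: W i → A r ≤ A i) ∧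
  (∀ i, b < i → i ≤ e → X <+: W i → A i = A r → r ≤ i)

/-!
Write `k = 1 + ⌊log₂ m⌋` and `β = ℓ + k + 1`. The string `T` is a concatenation of blocks
`rev(W[i]) · 4 · s(i-1)` of length `β`, and the symbol `4` occurs in `T` only as a block separator.
A suffix of `T` lies in `[P₁, P₂)` iff it is `rev(X) · 4 · V` with `s(b) ⪯ V ≺ s(e)`. The `4` pins
such a suffix to offset `ℓ - |X|` of some block `i`, which forces `X` to be a prefix of `W[i]` and
`V = s(i-1) · …`; as the codes `s(·)` have equal length and are ordered like the integers, the
condition on `V` becomes `b < i ≤ e`. So `𝒬 = {(i-1)β + ℓ - |X| + 1 : i ∈ 𝒫}`, and `j ↦ ⌈j/β⌉`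
inverts this map on `𝒫`.
-/

section LexOrder

variable {α : Type*}

theorem lexLe_cons_cons_iff [LT α] {a b : α} {A B : List α} :
    LexLe (a :: A) (b :: B) ↔ a < b ∨ a = b ∧ LexLe A B := by
  simp only [LexLe, LexLt, List.cons_lex_cons_iff, List.cons.injEq]
  tauto

theorem lexLt_append_left_iff_of_length_eq [LT α] {A B : List α} (R : List α)
    (h : A.length = B.length) : LexLt (A ++ R) B ↔ LexLt A B := by
  induction A generalizing B with
  | nil =>
    obtain rfl := List.length_eq_zero_iff.1 h.symm
    simp [LexLt, List.not_lex_nil]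
  | cons a A ih =>
    obtain ⟨b, B, rfl⟩ := List.exists_cons_of_length_eq_add_one h.symm
    simp only [LexLt, List.cons_append, List.cons_lex_cons_iff] at ih ⊢
    rw [ih (by simpa using h)]

theorem lexLe_append_right_iff_of_length_eq [LT α] {A B : List α} (R : List α)
    (h : A.length = B.length) : LexLe B (A ++ R) ↔ LexLe B A := by
  induction A generalizing B with
  | nil =>
    obtain rfl := List.length_eq_zero_iff.1 h.symm
    simp only [LexLe, LexLt, List.nil_append, or_true, iff_true]
    exact (List.lex_nil_or_eq_nil R).imp_right Eq.symm
  | cons a A ih =>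
    obtain ⟨b, B, rfl⟩ := List.exists_cons_of_length_eq_add_one h.symm
    rw [List.cons_append, lexLe_cons_cons_iff, lexLe_cons_cons_iff, ih (by simpa using h)]

theorem lexLe_append_and_lexLt_append_iff [LinearOrder α] (C A B U : List α) :
    LexLe (C ++ A) U ∧ LexLt U (C ++ B) ↔ ∃ V, U = C ++ V ∧ LexLe A V ∧ LexLt V B := by
  induction C generalizing U with
  | nil => simp
  | cons c C ih =>
    cases U with
    | nil => simp [LexLe, LexLt, List.not_lex_nil]
    | cons u U =>
      rw [List.cons_append, List.cons_append, lexLe_cons_cons_iff, LexLt,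
        List.cons_lex_cons_iff, ← LexLt]
      constructor
      · rintro ⟨hc | ⟨rfl, hle⟩, hu | ⟨hu, hlt⟩⟩
        · exact absurd hc (lt_asymm hu)
        · exact absurd hc (hu ▸ lt_irrefl u)
        · exact absurd hu (lt_irrefl c)
        · obtain ⟨V, rfl, hV⟩ := (ih U).1 ⟨hle, hlt⟩
          exact ⟨V, rfl, hV⟩
      · rintro ⟨V, hU, hV⟩
        obtain ⟨rfl, rfl⟩ := List.cons.inj hU
        exact ⟨Or.inr ⟨rfl, ((ih _).2 ⟨V, rfl, hV⟩).1⟩, Or.inr ⟨rfl, ((ih _).2 ⟨V, rfl, hV⟩).2⟩⟩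

theorem List.lex_map_iff_of_strictMono [LinearOrder α] {f : α → α} (hf : StrictMono f)
    (A B : List α) : List.Lex (· < ·) (A.map f) (B.map f) ↔ List.Lex (· < ·) A B := by
  induction A generalizing B with
  | nil => cases B <;> simp [List.not_lex_nil]
  | cons a A ih =>
    cases B with
    | nil => simp [List.not_lex_nil]
    | cons b B =>
      simp only [List.map_cons, List.cons_lex_cons_iff, hf.lt_iff_lt, hf.injective.eq_iff, ih]

end LexOrder

section BinaryEncoding

theorem binSym_succ (k x : ℕ) :
    binSym (k + 1) x = (x / 2 ^ k % 2) :: binSym k (x % 2 ^ k) := by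
  simp only [binSym, List.range_succ_eq_map, List.map_cons, List.map_map, Nat.add_sub_cancel,
    Nat.sub_zero, List.cons.injEq, true_and]
  refine List.map_congr_left fun a ha => ?_
  have ha : a < k := List.mem_range.1 ha
  simp only [Function.comp_apply, ← Nat.toNat_testBit, Nat.testBit_mod_two_pow,
    show k - 1 - a < k by omega, decide_true, Bool.true_and, show k - (a + 1) = k - 1 - a by omega]

theorem binSym_lex_iff {k x y : ℕ} (hx : x < 2 ^ k) (hy : y < 2 ^ k) :
    List.Lex (· < ·) (binSym k x) (binSym k y) ↔ x < y := by
  induction k generalizing x y with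
  | zero => simp_all [binSym, List.not_lex_nil]
  | succ k ih =>
    have hxk : x / 2 ^ k < 2 := Nat.div_lt_of_lt_mul (by rwa [← pow_succ])
    have hyk : y / 2 ^ k < 2 := Nat.div_lt_of_lt_mul (by rwa [← pow_succ])
    rw [binSym_succ, binSym_succ, List.cons_lex_cons_iff, Nat.mod_eq_of_lt hxk,
      Nat.mod_eq_of_lt hyk, ih (Nat.mod_lt _ (by positivity)) (Nat.mod_lt _ (by positivity))]
    have hx' := Nat.div_add_mod x (2 ^ k)
    have hy' := Nat.div_add_mod y (2 ^ k)
    constructor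
    · rintro (hlt | ⟨heq, hlt⟩)
      · exact Nat.lt_of_div_lt_div hlt
      · rw [heq] at hx'
        omega
    · intro hxy
      rcases (Nat.div_le_div_right (c := 2 ^ k) hxy.le).lt_or_eq with hlt | heq
      · exact Or.inl hlt
      · refine Or.inr ⟨heq, ?_⟩
        rw [heq] at hx'
        omega

variable {k x y : ℕ}

theorem length_sEnc : (sEnc k x).length = k := by simp [sEnc, binSym]

theorem four_not_mem_sEnc : 4 ∉ sEnc k x := by
  simp only [sEnc, binSym, List.mem_map, List.mem_range, not_exists, not_and]
  omega

theorem sEnc_lexLt_iff (hx : x < 2 ^ k) (hy : y < 2 ^ k) :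
    LexLt (sEnc k x) (sEnc k y) ↔ x < y := by
  rw [LexLt, sEnc, sEnc, List.lex_map_iff_of_strictMono (fun _ _ h => Nat.add_lt_add_right h 2),
    binSym_lex_iff hx hy]

theorem sEnc_lexLe_iff (hx : x < 2 ^ k) (hy : y < 2 ^ k) :
    LexLe (sEnc k x) (sEnc k y) ↔ x ≤ y := by
  rw [LexLe, sEnc_lexLt_iff hx hy, le_iff_lt_or_eq]
  refine or_congr_right ⟨fun h => ?_, congrArg _⟩
  by_contra hne
  rcases Nat.lt_or_gt_of_ne hne with hlt | hlt
  all_goals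
    have := (sEnc_lexLt_iff ‹_› ‹_›).2 hlt
    simp only [h, LexLt] at this
    exact List.lt_irrefl _ this

end BinaryEncoding

namespace List

variable {α : Type*}

theorem length_flatten_of_forall_length_eq {L : List (List α)} {β : ℕ}
    (hL : ∀ l ∈ L, l.length = β) : L.flatten.length = L.length * β := by
  rw [length_flatten, map_congr_left hL, map_const', sum_replicate, smul_eq_mul]

theorem drop_flatten_of_forall_length_eq {L : List (List α)} {β : ℕ}
    (hL : ∀ l ∈ L, l.length = β) {q d : ℕ} (hq : q < L.length) (hd : d ≤ β) :
    L.flatten.drop (q * β + d) = L[q].drop d ++ (L.drop (q + 1)).flatten := by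
  induction L generalizing q with
  | nil => simp at hq
  | cons l L ih =>
    have hl : l.length = β := hL l mem_cons_self
    cases q with
    | zero => simp [drop_append_of_le_length (hl ▸ hd)]
    | succ q =>
      rw [flatten_cons, show (q + 1) * β + d = l.length + (q * β + d) by rw [hl]; ring,
        ← drop_drop, drop_left' rfl,
        ih (fun l' hl' => hL l' (mem_cons_of_mem l hl')) (by simpa using hq)]
      simp

theorem eq_length_of_getElem?_append_cons_eq {A B : List α} {c : α} {i : ℕ} (hA : c ∉ A)
    (hB : c ∉ B) (h : (A ++ c :: B)[i]? = some c) : i = A.length := by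
  rcases lt_trichotomy i A.length with hi | hi | hi
  · rw [getElem?_append_left hi] at h
    exact absurd (mem_of_getElem? h) hA
  · exact hi
  · obtain ⟨n, rfl⟩ := Nat.exists_eq_add_of_lt hi
    rw [getElem?_append_right (by omega), show A.length + n + 1 - A.length = n + 1 by omega,
      getElem?_cons_succ] at h
    exact absurd (mem_of_getElem? h) hB

theorem drop_reverse_eq_reverse_iff_prefix {X W : List α} :
    W.reverse.drop (W.length - X.length) = X.reverse ↔ X <+: W := by
  rw [← reverse_suffix, suffix_iff_eq_drop, length_reverse, length_reverse, eq_comm]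

end List

section SeqToString

variable {m ℓ : ℕ} {W : ℕ → List ℕ}

theorem length_seqToString_block (hWlen : ∀ i, 1 ≤ i → i ≤ m → (W i).length = ℓ) :
    ∀ l ∈ (List.range m).map
      (fun i => (W (i + 1)).reverse ++ [4] ++ sEnc (1 + Nat.log 2 m) i),
      l.length = ℓ + Nat.log 2 m + 2 := by
  simp only [List.mem_map, List.mem_range, forall_exists_index, and_imp]
  rintro _ i hi rfl
  simp [hWlen (i + 1) (by omega) (by omega), length_sEnc]
  omega

theorem drop_seqToString (hWlen : ∀ i, 1 ≤ i → i ≤ m → (W i).length = ℓ) {q d : ℕ}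
    (hq : q < m) (hd : d ≤ ℓ) : ∃ R, (SeqToString m W).drop (q * (ℓ + Nat.log 2 m + 2) + d) =
      (W (q + 1)).reverse.drop d ++ 4 :: (sEnc (1 + Nat.log 2 m) q ++ R) := by
  rw [SeqToString, List.drop_flatten_of_forall_length_eq (length_seqToString_block hWlen)
    (by simpa using hq) (by omega)]
  simp [List.drop_append_of_le_length, hWlen (q + 1) (by omega) (by omega), hd]

theorem eq_of_getElem?_seqToString_eq_four (hWlen : ∀ i, 1 ≤ i → i ≤ m → (W i).length = ℓ)
    (hWbin : ∀ i, 1 ≤ i → i ≤ m → ∀ a ∈ W i, a < 2) {p : ℕ}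
    (h : (SeqToString m W)[p]? = some 4) : ∃ q < m, p = q * (ℓ + Nat.log 2 m + 2) + ℓ := by
  set β := ℓ + Nat.log 2 m + 2
  have hL := length_seqToString_block hWlen
  obtain ⟨q, o, ho, rfl⟩ : ∃ q o, o < β ∧ p = q * β + o :=
    ⟨p / β, p % β, Nat.mod_lt p (by omega), by rw [mul_comm]; exact (Nat.div_add_mod p β).symm⟩
  have hq : q < m := by
    have := (List.getElem?_eq_some_iff.1 h).1
    rw [SeqToString, List.length_flatten_of_forall_length_eq hL, List.length_map,
      List.length_range] at this
    exact Nat.lt_of_mul_lt_mul_right ((Nat.le_add_right _ o).trans_lt this)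
  have hWq := hWlen (q + 1) (by omega) (by omega)
  have hdrop := List.drop_flatten_of_forall_length_eq hL (by simpa using hq) (Nat.zero_le β)
  rw [Nat.add_zero, List.drop_zero] at hdrop
  rw [← List.getElem?_drop, SeqToString, hdrop,
    List.getElem?_append_left (by simp [hWq, length_sEnc]; omega)] at h
  have hW4 : 4 ∉ (W (q + 1)).reverse := fun h4 =>
    absurd (hWbin _ (by omega) (by omega) 4 (List.mem_reverse.1 h4)) (by omega)
  have ho : o = ℓ := by
    simpa [hWq] using List.eq_length_of_getElem?_append_cons_eq hW4 four_not_mem_sEnc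
      (by simpa using h)
  exact ⟨q, hq, by rw [ho]⟩

end SeqToString

section LexRange

variable {m ℓ : ℕ} {W : ℕ → List ℕ} {X : List ℕ}

theorem exists_of_drop_seqToString_eq (hWlen : ∀ i, 1 ≤ i → i ≤ m → (W i).length = ℓ)
    (hWbin : ∀ i, 1 ≤ i → i ≤ m → ∀ a ∈ W i, a < 2) (hXlen : X.length ≤ ℓ) {p : ℕ}
    {V : List ℕ} (h : (SeqToString m W).drop p = X.reverse ++ 4 :: V) :
    ∃ q < m, X <+: W (q + 1) ∧ p = q * (ℓ + Nat.log 2 m + 2) + (ℓ - X.length) ∧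
      ∃ R, V = sEnc (1 + Nat.log 2 m) q ++ R := by
  have h4 : (SeqToString m W)[p + X.length]? = some 4 := by
    rw [← List.getElem?_drop, h]
    simp
  obtain ⟨q, hq, hpq⟩ := eq_of_getElem?_seqToString_eq_four hWlen hWbin h4
  have hp : p = q * (ℓ + Nat.log 2 m + 2) + (ℓ - X.length) := by omega
  obtain ⟨R, hR⟩ := drop_seqToString hWlen hq (Nat.sub_le ℓ X.length)
  rw [← hp, h] at hR
  have hWq := hWlen (q + 1) (by omega) (by omega)
  obtain ⟨hX, hV⟩ := List.append_inj hR (by simp [hWq]; omega)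
  refine ⟨q, hq, ?_, hp, R, List.cons.inj hV |>.2⟩
  rw [← List.drop_reverse_eq_reverse_iff_prefix, hWq, ← hX]

theorem lexRange_seqToString (hWlen : ∀ i, 1 ≤ i → i ≤ m → (W i).length = ℓ)
    (hWbin : ∀ i, 1 ≤ i → i ≤ m → ∀ a ∈ W i, a < 2) (hXlen : X.length ≤ ℓ) {b e : ℕ}
    (hb : b ≤ m) (he : e ≤ m) :
    LexRange (X.reverse ++ [4] ++ sEnc (1 + Nat.log 2 m) b)
        (X.reverse ++ [4] ++ sEnc (1 + Nat.log 2 m) e) (SeqToString m W) =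
      (fun i => (i - 1) * (ℓ + Nat.log 2 m + 2) + (ℓ - X.length) + 1) ''
        { i | b < i ∧ i ≤ e ∧ X <+: W i } := by
  have hpow : ∀ q ≤ m, q < 2 ^ (1 + Nat.log 2 m) := fun q hq =>
    hq.trans_lt (add_comm 1 (Nat.log 2 m) ▸ Nat.lt_pow_succ_log_self one_lt_two m)
  have hcode : ∀ q ≤ m, ∀ R, LexLe (sEnc (1 + Nat.log 2 m) b) (sEnc (1 + Nat.log 2 m) q ++ R) ∧
      LexLt (sEnc (1 + Nat.log 2 m) q ++ R) (sEnc (1 + Nat.log 2 m) e) ↔ b ≤ q ∧ q < e :=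
    fun q hq R => by
      rw [lexLe_append_right_iff_of_length_eq R (by simp [length_sEnc]),
        lexLt_append_left_iff_of_length_eq R (by simp [length_sEnc]),
        sEnc_lexLe_iff (hpow b hb) (hpow q hq), sEnc_lexLt_iff (hpow q hq) (hpow e he)]
  ext j
  simp only [LexRange, Suf, Set.mem_ofPred_eq, Set.mem_image, lexLe_append_and_lexLt_append_iff]
  constructor
  · rintro ⟨hj, -, V, hV, hbV, hVe⟩
    rw [List.append_assoc, List.singleton_append] at hV
    obtain ⟨q, hq, hX, hjq, R, rfl⟩ := exists_of_drop_seqToString_eq hWlen hWbin hXlen hV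
    obtain ⟨hbq, hqe⟩ := (hcode q hq.le R).1 ⟨hbV, hVe⟩
    exact ⟨q + 1, ⟨by omega, by omega, hX⟩, by simp only [Nat.add_sub_cancel]; omega⟩
  · rintro ⟨i, ⟨hbi, hie, hXi⟩, rfl⟩
    have hWi := hWlen i (by omega) (by omega)
    obtain ⟨R, hR⟩ := drop_seqToString hWlen (q := i - 1) (by omega) (Nat.sub_le ℓ X.length)
    have hrev : (W i).reverse.drop (ℓ - X.length) = X.reverse := by
      rw [← hWi]
      exact List.drop_reverse_eq_reverse_iff_prefix.2 hXi
    rw [show i - 1 + 1 = i by omega, hrev] at hR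
    have hlen : (i - 1) * (ℓ + Nat.log 2 m + 2) + (ℓ - X.length) < (SeqToString m W).length := by
      by_contra! hlen
      rw [List.drop_eq_nil_of_le hlen] at hR
      simp at hR
    rw [Nat.add_sub_cancel]
    exact ⟨by omega, hlen, _, by simpa using hR,
      (hcode (i - 1) (by omega) R).2 ⟨by omega, by omega⟩⟩

end LexRange

theorem cdiv_mul_add_add_one {β q r : ℕ} (hr : r < β) : cdiv (q * β + r + 1) β = q + 1 := by
  rw [cdiv, show q * β + r + 1 + β - 1 = (r + β) + q * β by omega,
    Nat.add_mul_div_right _ _ (by omega), Nat.div_eq_of_lt_le (k := 1) (by omega) (by omega)]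
  omega

theorem stmt10_general (m ℓ : ℕ) (W : ℕ → List ℕ)
    (hWlen : ∀ i, 1 ≤ i → i ≤ m → (W i).length = ℓ)
    (hWbin : ∀ i, 1 ≤ i → i ≤ m → ∀ a ∈ W i, a < 2)
    (X : List ℕ) (hXlen : X.length ≤ ℓ)
    (b e : ℕ) (hb : b ≤ m) (he : e ≤ m) :
    ({ i | b < i ∧ i ≤ e ∧ X <+: W i } =
      (fun j => cdiv j (ℓ + Nat.log 2 m + 2)) ''
        LexRange (X.reverse ++ [4] ++ sEnc (1 + Nat.log 2 m) b)
          (X.reverse ++ [4] ++ sEnc (1 + Nat.log 2 m) e) (SeqToString m W)) ∧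
    ({ i | b < i ∧ i ≤ e ∧ X <+: W i }.ncard =
      (LexRange (X.reverse ++ [4] ++ sEnc (1 + Nat.log 2 m) b)
        (X.reverse ++ [4] ++ sEnc (1 + Nat.log 2 m) e) (SeqToString m W)).ncard) := by
  have hinv : Set.LeftInvOn (fun j => cdiv j (ℓ + Nat.log 2 m + 2))
      (fun i => (i - 1) * (ℓ + Nat.log 2 m + 2) + (ℓ - X.length) + 1)
      { i | b < i ∧ i ≤ e ∧ X <+: W i } := fun i ⟨hbi, _⟩ => by
    simp only [cdiv_mul_add_add_one (show ℓ - X.length < ℓ + Nat.log 2 m + 2 by omega)]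
    omega
  rw [lexRange_seqToString hWlen hWbin hXlen hb he]
  exact ⟨hinv.image_image.symm, hinv.injOn.ncard_image.symm⟩

theorem stmt10 (m ℓ : ℕ) (hm : 1 ≤ m) (hℓ : 1 ≤ ℓ) (W : ℕ → List ℕ)
    (hWlen : ∀ i, 1 ≤ i → i ≤ m → (W i).length = ℓ)
    (hWbin : ∀ i, 1 ≤ i → i ≤ m → ∀ a ∈ W i, a < 2)
    (X : List ℕ) (hXlen : X.length ≤ ℓ) (hXbin : ∀ a ∈ X, a < 2)
    (b e : ℕ) (hb : b ≤ m) (he : e ≤ m) :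
    ({ i | b < i ∧ i ≤ e ∧ X <+: W i } =
      (fun j => cdiv j (ℓ + Nat.log 2 m + 2)) ''
        LexRange (X.reverse ++ [4] ++ sEnc (1 + Nat.log 2 m) b)
          (X.reverse ++ [4] ++ sEnc (1 + Nat.log 2 m) e) (SeqToString m W)) ∧
    ({ i | b < i ∧ i ≤ e ∧ X <+: W i }.ncard =
      (LexRange (X.reverse ++ [4] ++ sEnc (1 + Nat.log 2 m) b)
        (X.reverse ++ [4] ++ sEnc (1 + Nat.log 2 m) e) (SeqToString m W)).ncard) :=
  stmt10_general m ℓ W hWlen hWbin X hXlen b e hb he
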